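/- arXiv:2404.10390 — 3 statements merged into one kernel-verified Lean document; each statement's English description precedes it below -/
import Mathlib

section
/- If a finite graph G admits an involutive automorphism f such that for every edge e = {u,v} of G, the image edge f(e) = {f(u), f(v)} is vertex-disjoint from e, then the second player has a winning strategy in Arc-Kayles played on G. -/
/-!
The second player copies the first through `f`: to a move on the edge `uv` they answer with the
edge `f u f v`. Since `uv` and its image are disjoint, the answer is still available after the
first player's move, and since `f` is an involutive automorphism, the remaining position is again
`f`-invariant. Hence the second player always has a reply and never runs out of moves first.
-/

open SimpleGraph Finset

variable {V : Type*} [Fintype V] [DecidableEq V]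

/-- A legal move in Arc-Kayles on position `s` (the set of remaining vertices of `G`):
pick an edge of the remaining graph and delete its two endpoints. -/
def AKLegal (G : SimpleGraph V) (s : Finset V) (u v : V) : Prop :=
  u ∈ s ∧ v ∈ s ∧ G.Adj u v

/-- Fuel-indexed winning predicate for Arc-Kayles (normal play). -/
def AKWinAux (G : SimpleGraph V) : ℕ → Finset V → Prop
  | 0, _ => False
  | n + 1, s => ∃ u v, AKLegal G s u v ∧ ¬ AKWinAux G n (s \ {u, v})

/-- The player to move wins Arc-Kayles from position `s`. (The fuel `s.card` bounds
the number of moves, since every move removes two vertices.) -/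
def AKFirstWins (G : SimpleGraph V) (s : Finset V) : Prop :=
  AKWinAux G s.card s

section

variable {α : Type*} [DecidableEq α]

theorem Function.Involutive.mapsTo_sdiff_pair_sdiff_pair {f : α → α}
    (hf : Function.Involutive f) {s : Finset α} (hs : Set.MapsTo f s s) (u v : α) :
    Set.MapsTo f ↑((s \ {u, v}) \ {f u, f v}) ↑((s \ {u, v}) \ {f u, f v}) := by
  intro x hx
  simp only [coe_sdiff, coe_insert, coe_singleton, Set.mem_sdiff, Set.mem_insert_iff,
    Set.mem_singleton_iff, not_or] at hx ⊢
  obtain ⟨⟨hxs, hxu, hxv⟩, hxfu, hxfv⟩ := hx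
  refine ⟨⟨hs hxs, ?_, ?_⟩, fun h => hxu (hf.injective h), fun h => hxv (hf.injective h)⟩
  · rintro rfl; exact hxfu (hf x).symm
  · rintro rfl; exact hxfv (hf x).symm

variable {G : SimpleGraph α} {s : Finset α} {u v : α}

theorem AKLegal.card_sdiff (h : AKLegal G s u v) : (s \ {u, v}).card + 2 = s.card := by
  obtain ⟨hu, hv, huv⟩ := h
  rw [← card_pair (G.ne_of_adj huv)]
  exact card_sdiff_add_card_eq_card (insert_subset hu (singleton_subset_iff.mpr hv))

theorem AKLegal.mirror {f : G ≃g G}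
    (hdisj : ∀ u v : α, G.Adj u v → f u ≠ u ∧ f u ≠ v ∧ f v ≠ u ∧ f v ≠ v)
    (hs : Set.MapsTo f s s) (h : AKLegal G s u v) : AKLegal G (s \ {u, v}) (f u) (f v) := by
  obtain ⟨hu, hv, huv⟩ := h
  obtain ⟨hfu, hfuv, hfvu, hfv⟩ := hdisj u v huv
  simp only [AKLegal, mem_sdiff, mem_insert, mem_singleton, not_or, f.map_adj_iff]
  exact ⟨⟨hs hu, hfu, hfuv⟩, ⟨hs hv, hfvu, hfv⟩, huv⟩

theorem not_akWinAux_of_mapsTo {f : G ≃g G} (hf : Function.Involutive f)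
    (hdisj : ∀ u v : α, G.Adj u v → f u ≠ u ∧ f u ≠ v ∧ f v ≠ u ∧ f v ≠ v) {n : ℕ}
    (hs : Set.MapsTo f s s) (hn : s.card ≤ n) : ¬ AKWinAux G n s := by
  induction n using Nat.strong_induction_on generalizing s with
  | _ n ih =>
    rcases n with _ | n
    · exact id
    rintro ⟨u, v, hmove : AKLegal G s u v, hlose⟩
    have hreply := hmove.mirror hdisj hs
    have hcard_move := hmove.card_sdiff
    have hcard_reply := hreply.card_sdiff
    obtain ⟨m, rfl⟩ : ∃ m, n = m + 1 := ⟨n - 1, by omega⟩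
    exact hlose ⟨f u, f v, hreply,
      ih m (by omega) (hf.mapsTo_sdiff_pair_sdiff_pair hs u v) (by omega)⟩

end

/-- If a finite graph `G` admits an involutive automorphism `f` such that every edge is
vertex-disjoint from its image, then the second player wins Arc-Kayles on `G`. -/
theorem stmt_1 (G : SimpleGraph V) (f : G ≃g G)
    (hinv : ∀ x : V, f (f x) = x)
    (hdisj : ∀ u v : V, G.Adj u v → f u ≠ u ∧ f u ≠ v ∧ f v ≠ u ∧ f v ≠ v) :
    ¬ AKFirstWins G Finset.univ :=
  not_akWinAux_of_mapsTo hinv hdisj (fun x _ => mem_coe.mpr (mem_univ (f x))) le_rfl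
end

section
/- Let G be a connected graph and v a vertex of G with at least three pendant leaves. Then in Non-Disconnecting Arc-Kayles, no legal move ever removes any of these leaves or the vertex v, at any point of the game. -/
/-!
A move through `v` deletes `v` and at most one of its three pendant leaves, so at least two
leaves survive; their only neighbour is gone, so they are isolated in the remaining graph,
which is then neither empty nor connected. A move through a leaf must use its edge to `v`, so
it is illegal for the same reason. Hence no legal move ever deletes a leaf, and by induction all
three leaves are present in every reachable position.
-/

open SimpleGraph Finset

variable {V : Type*} [Fintype V] [DecidableEq V]

/-- A legal move in Non-Disconnecting Arc-Kayles on position `s`. -/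
def NDLegal (G : SimpleGraph V) (s : Finset V) (u v : V) : Prop :=
  u ∈ s ∧ v ∈ s ∧ G.Adj u v ∧
    (s \ {u, v} = ∅ ∨ (G.induce ((s \ {u, v} : Finset V) : Set V)).Connected)

/-- `NDReach G s t` : position `t` is reachable from position `s` by a (possibly empty)
sequence of legal moves of Non-Disconnecting Arc-Kayles. -/
inductive NDReach (G : SimpleGraph V) : Finset V → Finset V → Prop
  | refl (s : Finset V) : NDReach G s s
  | step (s t : Finset V) (u v : V) (h : NDReach G s t) (h' : NDLegal G t u v) :
      NDReach G s (t \ {u, v})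

omit [Fintype V] [DecidableEq V] in
theorem SimpleGraph.not_preconnected_induce_of_forall_not_adj {G : SimpleGraph V} {t : Set V}
    {a b : V} (ha : a ∈ t) (hb : b ∈ t) (hab : a ≠ b) (hiso : ∀ x ∈ t, ¬ G.Adj a x) :
    ¬ (G.induce t).Preconnected := by
  have : Nontrivial t := ⟨⟨a, ha⟩, ⟨b, hb⟩, by simpa using hab⟩
  exact fun h => h.not_isIsolated ⟨a, ha⟩ fun x hx => hiso x x.2 hx

namespace NDLegal

omit [Fintype V]

variable {G : SimpleGraph V} {s : Finset V} {u w v : V}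

theorem symm (h : NDLegal G s u w) : NDLegal G s w u := by
  obtain ⟨hu, hw, hadj, hrest⟩ := h
  exact ⟨hw, hu, hadj.symm, by rwa [Finset.pair_comm]⟩

variable {ι : Type*} [Fintype ι] {ℓ : ι → V}

theorem left_ne_of_pendant_leaves (hcard : 3 ≤ Fintype.card ι) (hinj : Function.Injective ℓ)
    (hleaf : ∀ i x, G.Adj (ℓ i) x ↔ x = v) (hs : ∀ i, ℓ i ∈ s) (h : NDLegal G s u w) :
    u ≠ v := by
  rintro rfl
  set rest := s \ {u, w}
  have survivor {a : V} (ha : a ∈ (univ.image ℓ).erase w) :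
      a ∈ rest ∧ ∀ x ∈ rest, ¬ G.Adj a x := by
    obtain ⟨haw, i, -, rfl⟩ := by simpa only [mem_erase, mem_image] using ha
    have hiu : ℓ i ≠ u := G.ne_of_adj ((hleaf i u).mpr rfl)
    refine ⟨by simp [rest, hs i, hiu, haw], fun x hx hadj => ?_⟩
    rw [(hleaf i x).mp hadj] at hx
    simp [rest] at hx
  have two_survivors : 1 < ((univ.image ℓ).erase w).card := by
    have := pred_card_le_card_erase (s := univ.image ℓ) (a := w)
    rw [card_image_of_injective _ hinj, card_univ] at this
    omega
  obtain ⟨a, ha, b, hb, hab⟩ := one_lt_card.mp two_survivors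
  rcases h.2.2.2 with hempty | hconn
  · exact notMem_empty a (hempty ▸ (survivor ha).1)
  · exact not_preconnected_induce_of_forall_not_adj (survivor ha).1 (survivor hb).1 hab
      (survivor ha).2 hconn.preconnected

theorem ne_of_pendant_leaves (hcard : 3 ≤ Fintype.card ι) (hinj : Function.Injective ℓ)
    (hleaf : ∀ i x, G.Adj (ℓ i) x ↔ x = v) (hs : ∀ i, ℓ i ∈ s) (h : NDLegal G s u w) :
    u ≠ v ∧ w ≠ v ∧ ∀ i, u ≠ ℓ i ∧ w ≠ ℓ i := by
  have hu := h.left_ne_of_pendant_leaves hcard hinj hleaf hs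
  have hw := h.symm.left_ne_of_pendant_leaves hcard hinj hleaf hs
  refine ⟨hu, hw, fun i => ⟨?_, ?_⟩⟩
  · rintro rfl
    exact hw ((hleaf i w).mp h.2.2.1)
  · rintro rfl
    exact hu ((hleaf i u).mp h.2.2.1.symm)

end NDLegal

omit [Fintype V] in
theorem NDReach.pendant_leaves_mem {G : SimpleGraph V} {s₀ s : Finset V} {v : V} {ι : Type*}
    [Fintype ι] {ℓ : ι → V} (hcard : 3 ≤ Fintype.card ι) (hinj : Function.Injective ℓ)
    (hleaf : ∀ i x, G.Adj (ℓ i) x ↔ x = v) (h₀ : ∀ i, ℓ i ∈ s₀) (h : NDReach G s₀ s) :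
    ∀ i, ℓ i ∈ s := by
  induction h with
  | refl => exact h₀
  | step t u w _ hmove ih =>
    have hne := (hmove.ne_of_pendant_leaves hcard hinj hleaf ih).2.2
    intro i
    simp [ih i, (hne i).1.symm, (hne i).2.symm]

theorem stmt_9_general (G : SimpleGraph V) (v : V) (ℓ : Fin 3 → V)
    (hinj : Function.Injective ℓ)
    (hleaf : ∀ i : Fin 3, ∀ x : V, G.Adj (ℓ i) x ↔ x = v) :
    ∀ s : Finset V, NDReach G Finset.univ s →
      ∀ u w : V, NDLegal G s u w →
        u ≠ v ∧ w ≠ v ∧ ∀ i : Fin 3, u ≠ ℓ i ∧ w ≠ ℓ i := by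
  have hcard : 3 ≤ Fintype.card (Fin 3) := (Fintype.card_fin 3).ge
  intro s hs u w hmove
  exact hmove.ne_of_pendant_leaves hcard hinj hleaf
    (hs.pendant_leaves_mem hcard hinj hleaf fun _ => mem_univ _)

/-- If a connected graph `G` has a vertex `v` with at least three pendant leaves
`ℓ 0, ℓ 1, ℓ 2`, then in Non-Disconnecting Arc-Kayles no legal move, at any point of the
game, removes any of these leaves or the vertex `v`. -/
theorem stmt_9 (G : SimpleGraph V) (hconn : G.Connected) (v : V) (ℓ : Fin 3 → V)
    (hinj : Function.Injective ℓ)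
    (hleaf : ∀ i : Fin 3, ∀ x : V, G.Adj (ℓ i) x ↔ x = v) :
    ∀ s : Finset V, NDReach G Finset.univ s →
      ∀ u w : V, NDLegal G s u w →
        u ≠ v ∧ w ≠ v ∧ ∀ i : Fin 3, u ≠ ℓ i ∧ w ≠ ℓ i :=
  stmt_9_general G v ℓ hinj hleaf
end

section
/- Let G' be the graph built in the reduction in the previous context (control vertex c with M+1 leaves, star centers v' with M-1 leaves each joined to c, and for each original edge (u,v) a vertex e_{uv} with M leaves joined to u' and v'), where G has at least one edge. Then G' is bipartite and contains a cycle of length 4, and every cycle of G' has even length; in particular G' has girth 4. -/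
open SimpleGraph Finset

/-- The graph `G'` of the Node-Kayles reduction: a control vertex `c` (`Sum.inl ()`) with
`M+1` pendant leaves; for each vertex `v` of `G` a star center `v'` with `M-1` pendant
leaves and the edge `(c, v')`; for each edge `e = (u,v)` of `G` a vertex `e_{uv}` with `M`
pendant leaves and the edges `(u', e_{uv})` and `(v', e_{uv})`. -/
def nodeKaylesReduction {V : Type*} (G : SimpleGraph V) (M : ℕ) :
    SimpleGraph
      (Unit ⊕ Fin (M + 1) ⊕ V ⊕ (V × Fin (M - 1)) ⊕ G.edgeSet ⊕ (G.edgeSet × Fin M)) :=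
  SimpleGraph.fromRel fun a b =>
    match a, b with
    | Sum.inl _, Sum.inr (Sum.inl _) => True                       -- c — leaf of c
    | Sum.inl _, Sum.inr (Sum.inr (Sum.inl _)) => True             -- c — v'
    | Sum.inr (Sum.inr (Sum.inl v)),
      Sum.inr (Sum.inr (Sum.inr (Sum.inl (w, _)))) => v = w        -- v' — leaf of v'
    | Sum.inr (Sum.inr (Sum.inl v)),
      Sum.inr (Sum.inr (Sum.inr (Sum.inr (Sum.inl e)))) =>
        v ∈ (e : Sym2 V)                                           -- v' — e_{uv}
    | Sum.inr (Sum.inr (Sum.inr (Sum.inr (Sum.inl e)))),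
      Sum.inr (Sum.inr (Sum.inr (Sum.inr (Sum.inr (e', _))))) =>
        e = e'                                                     -- e_{uv} — leaf
    | _, _ => False

/-- The parity 2-coloring of the reduction graph. -/
def nkCol {V : Type*} (G : SimpleGraph V) (M : ℕ) :
    (Unit ⊕ Fin (M + 1) ⊕ V ⊕ (V × Fin (M - 1)) ⊕ G.edgeSet ⊕ (G.edgeSet × Fin M)) → ZMod 2
  | Sum.inl _ => 0
  | Sum.inr (Sum.inl _) => 1
  | Sum.inr (Sum.inr (Sum.inl _)) => 1
  | Sum.inr (Sum.inr (Sum.inr (Sum.inl _))) => 0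
  | Sum.inr (Sum.inr (Sum.inr (Sum.inr (Sum.inl _)))) => 0
  | Sum.inr (Sum.inr (Sum.inr (Sum.inr (Sum.inr _)))) => 1

lemma nkCol_valid {V : Type*} (G : SimpleGraph V) (M : ℕ) :
    ∀ {a b}, (nodeKaylesReduction G M).Adj a b → nkCol G M a ≠ nkCol G M b := by
  intro a b hab
  rw [nodeKaylesReduction, fromRel_adj] at hab
  obtain ⟨hne, h | h⟩ := hab <;>
  · rcases a with _ | (_ | (_ | (_ | (_ | _)))) <;>
      rcases b with _ | (_ | (_ | (_ | (_ | _)))) <;>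
      simp_all [nkCol]

lemma walk_parity {W : Type*} {H : SimpleGraph W} (C : H.Coloring (ZMod 2)) {x y : W}
    (p : H.Walk x y) : (p.length : ZMod 2) = C y - C x := by
  induction p with
  | nil => simp
  | @cons a b c h p ih =>
    have hne := C.valid h
    have key : ∀ u v : ZMod 2, u ≠ v → v - u = 1 := by decide
    rw [Walk.length_cons]
    calc ((p.length + 1 : ℕ) : ZMod 2) = (p.length : ZMod 2) + 1 := by push_cast; ring
      _ = (C c - C b) + (C b - C a) := by rw [ih, key _ _ hne]
      _ = C c - C a := by ring

/-- If `G` has an edge and `M ≥ 2`, then the reduction graph `G'` is bipartite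
(2-colorable), contains a 4-cycle, all of its cycles have even length, and its girth
is 4. -/
theorem stmt_15 {V : Type*} [Fintype V] [DecidableEq V] (G : SimpleGraph V)
    [DecidableRel G.Adj] (M : ℕ) (hM : 2 ≤ M) (hE : G.edgeSet.Nonempty) :
    (nodeKaylesReduction G M).Colorable 2 ∧
    (∃ (x : Unit ⊕ Fin (M + 1) ⊕ V ⊕ (V × Fin (M - 1)) ⊕ G.edgeSet ⊕ (G.edgeSet × Fin M))
       (c : (nodeKaylesReduction G M).Walk x x), c.IsCycle ∧ c.length = 4) ∧
    (∀ (x : Unit ⊕ Fin (M + 1) ⊕ V ⊕ (V × Fin (M - 1)) ⊕ G.edgeSet ⊕ (G.edgeSet × Fin M))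
       (c : (nodeKaylesReduction G M).Walk x x), c.IsCycle → Even c.length) ∧
    (nodeKaylesReduction G M).girth = 4 := by
  classical
  set G' := nodeKaylesReduction G M with hG'
  -- the 2-coloring
  let C : G'.Coloring (ZMod 2) := SimpleGraph.Coloring.mk (nkCol G M) (nkCol_valid G M)
  have hcol : G'.Colorable 2 := by
    have := C.colorable
    simpa using this
  -- every cycle is even
  have heven : ∀ (x : Unit ⊕ Fin (M + 1) ⊕ V ⊕ (V × Fin (M - 1)) ⊕ G.edgeSet ⊕ (G.edgeSet × Fin M))
      (c : G'.Walk x x), c.IsCycle → Even c.length := by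
    intro x c _
    have h := walk_parity C c
    simp only [sub_self] at h
    have : (2 : ℕ) ∣ c.length := by
      rwa [ZMod.natCast_eq_zero_iff] at h
    exact even_iff_two_dvd.mpr this
  -- the 4-cycle
  obtain ⟨e, he⟩ := hE
  induction e using Sym2.ind with
  | _ u v =>
    rw [SimpleGraph.mem_edgeSet] at he
    have huv : u ≠ v := he.ne
    have he' : s(u, v) ∈ G.edgeSet := he
    set vc : Unit ⊕ Fin (M + 1) ⊕ V ⊕ (V × Fin (M - 1)) ⊕ G.edgeSet ⊕ (G.edgeSet × Fin M) :=
      Sum.inl () with hvc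
    set vu : Unit ⊕ Fin (M + 1) ⊕ V ⊕ (V × Fin (M - 1)) ⊕ G.edgeSet ⊕ (G.edgeSet × Fin M) :=
      Sum.inr (Sum.inr (Sum.inl u)) with hvu
    set vv : Unit ⊕ Fin (M + 1) ⊕ V ⊕ (V × Fin (M - 1)) ⊕ G.edgeSet ⊕ (G.edgeSet × Fin M) :=
      Sum.inr (Sum.inr (Sum.inl v)) with hvv
    set ve : Unit ⊕ Fin (M + 1) ⊕ V ⊕ (V × Fin (M - 1)) ⊕ G.edgeSet ⊕ (G.edgeSet × Fin M) :=
      Sum.inr (Sum.inr (Sum.inr (Sum.inr (Sum.inl ⟨s(u, v), he'⟩)))) with hve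
    have adj1 : G'.Adj vc vu := by
      rw [hG', nodeKaylesReduction, fromRel_adj]
      exact ⟨by simp [hvc, hvu], Or.inl trivial⟩
    have adj2 : G'.Adj vu ve := by
      rw [hG', nodeKaylesReduction, fromRel_adj]
      exact ⟨by simp [hvu, hve], Or.inl (by simp [hvu, hve])⟩
    have adj3 : G'.Adj ve vv := by
      rw [hG', nodeKaylesReduction, fromRel_adj]
      exact ⟨by simp [hve, hvv], Or.inr (by simp [hve, hvv])⟩
    have adj4 : G'.Adj vv vc := by
      rw [hG', nodeKaylesReduction, fromRel_adj]
      exact ⟨by simp [hvv, hvc], Or.inr trivial⟩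
    let w : G'.Walk vc vc :=
      Walk.cons adj1 (Walk.cons adj2 (Walk.cons adj3 (Walk.cons adj4 Walk.nil)))
    have hwlen : w.length = 4 := rfl
    have hwcyc : w.IsCycle := by
      rw [Walk.isCycle_def]
      refine ⟨⟨?_⟩, by simp [w], ?_⟩
      · simp only [w, Walk.edges_cons, Walk.edges_nil]
        simp [hvc, hvu, hvv, hve, Sym2.eq_iff, huv]
      · simp only [w, Walk.support_cons, Walk.support_nil, List.tail]
        simp [hvc, hvu, hvv, hve, huv]
    refine ⟨hcol, ⟨vc, w, hwcyc, hwlen⟩, heven, ?_⟩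
    -- girth
    have hle : G'.egirth ≤ 4 := by
      have h1 : G'.egirth ≤ (w.length : ℕ∞) := by
        refine le_trans (iInf_le _ vc) (le_trans (iInf_le _ w) (iInf_le _ hwcyc))
      rw [hwlen] at h1
      exact_mod_cast h1
    have hge : (4 : ℕ∞) ≤ G'.egirth := by
      rw [SimpleGraph.le_egirth]
      intro a c hc
      have h3 := hc.three_le_length
      have h2 := heven a c hc
      obtain ⟨k, hk⟩ := h2
      have : 4 ≤ c.length := by omega
      exact_mod_cast this
    have hegirth : G'.egirth = 4 := le_antisymm hle hge
    rw [SimpleGraph.girth, hegirth]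
    rfl
end
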